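/- arXiv:1101.3953 — 5 statements merged into one kernel-verified Lean document; each statement's English description precedes it below -/
import Mathlib

section
/- Let γ ≥ 1 be a real number. Let a₁, a₂, p₁, p₂, q₁, q₂ be real numbers with a₁ ≥ a₂. Suppose that (i) p₁ ≥ (1/(3γ))·a₁, (ii) p₁ ≥ q₁ + q₂, (iii) p₂ ≥ (1/(3γ))·(a₁ − q₁), and (iv) p₂ ≥ (1/(3γ))·(a₂ − q₂). Then p₁ + p₂ ≥ ((12γ − 1)/(36γ²))·(a₁ + a₂). -/
/-- Arithmetic core of the 2VEHICLE analysis. -/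
theorem stmt_0 (γ a₁ a₂ p₁ p₂ q₁ q₂ : ℝ)
    (hγ : 1 ≤ γ) (ha : a₁ ≥ a₂)
    (h1 : p₁ ≥ 1 / (3 * γ) * a₁)
    (h2 : p₁ ≥ q₁ + q₂)
    (h3 : p₂ ≥ 1 / (3 * γ) * (a₁ - q₁))
    (h4 : p₂ ≥ 1 / (3 * γ) * (a₂ - q₂)) :
    p₁ + p₂ ≥ (12 * γ - 1) / (36 * γ ^ 2) * (a₁ + a₂) := by
  have hγ0 : (0:ℝ) < γ := by linarith
  rw [ge_iff_le, div_mul_eq_mul_div, div_le_iff₀ (by positivity)]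
  have e3 : 1 / (3 * γ) * (a₁ - q₁) = (a₁ - q₁) / (3 * γ) := by ring
  have e4 : 1 / (3 * γ) * (a₂ - q₂) = (a₂ - q₂) / (3 * γ) := by ring
  have e1 : 1 / (3 * γ) * a₁ = a₁ / (3 * γ) := by ring
  rw [ge_iff_le, e3, div_le_iff₀ (by positivity)] at h3
  rw [ge_iff_le, e4, div_le_iff₀ (by positivity)] at h4
  rw [ge_iff_le, e1, div_le_iff₀ (by positivity)] at h1
  nlinarith [sq_nonneg γ, sq_nonneg (6*γ - 1), mul_pos hγ0 hγ0,
    mul_le_mul_of_nonneg_left h1 (by nlinarith : (0:ℝ) ≤ 6*γ - 1),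
    mul_le_mul_of_nonneg_left (add_le_add h3 h4) (by positivity : (0:ℝ) ≤ 6*γ),
    mul_le_mul_of_nonneg_left h2 (by positivity : (0:ℝ) ≤ 2*γ)]
end

section
/- Let a₁, a₂, a₃, p₁, p₂, p₃ be real numbers and let q_{i,j} be real numbers for i ∈ {1,2,3}, j ∈ {1,2}, with a₁ ≥ a₂ ≥ a₃. Suppose that (i) p₁ + p₂ ≥ (11/36)·(a₁ + a₂), (ii) p_j ≥ q_{1,j} + q_{2,j} + q_{3,j} for j ∈ {1,2}, and (iii) p₃ ≥ (1/3)·(a_i − q_{i,1} − q_{i,2}) for each i ∈ {1,2,3}. Then p₁ + p₂ + p₃ ≥ (71/243)·(a₁ + a₂ + a₃). -/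
/-- Arithmetic core of the 3-vehicle case on a tree. -/
theorem stmt_1 (a₁ a₂ a₃ p₁ p₂ p₃ q₁₁ q₁₂ q₂₁ q₂₂ q₃₁ q₃₂ : ℝ)
    (ha12 : a₁ ≥ a₂) (ha23 : a₂ ≥ a₃)
    (hi : p₁ + p₂ ≥ 11 / 36 * (a₁ + a₂))
    (hii1 : p₁ ≥ q₁₁ + q₂₁ + q₃₁)
    (hii2 : p₂ ≥ q₁₂ + q₂₂ + q₃₂)
    (hiii1 : p₃ ≥ 1 / 3 * (a₁ - q₁₁ - q₁₂))
    (hiii2 : p₃ ≥ 1 / 3 * (a₂ - q₂₁ - q₂₂))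
    (hiii3 : p₃ ≥ 1 / 3 * (a₃ - q₃₁ - q₃₂)) :
    p₁ + p₂ + p₃ ≥ 71 / 243 * (a₁ + a₂ + a₃) := by
  linarith
end

section
/- Let k ≥ 2 be an integer and γ > 0 a real number. Let a₁, …, a_k, p₁, …, p_k be real numbers and q_{i,j} real numbers for 1 ≤ i ≤ k, 1 ≤ j ≤ k−1. Suppose that (i) p_j ≥ Σ_{i=1}^{k} q_{i,j} for every 1 ≤ j ≤ k−1, and (ii) p_k ≥ (1/(3γ))·(a_i − Σ_{j=1}^{k−1} q_{i,j}) for every 1 ≤ i ≤ k. Then Σ_{i=1}^{k} p_i ≥ ((3γk − 1)/(3γk))·Σ_{i=1}^{k−1} p_i + (1/(3γk))·Σ_{i=1}^{k} a_i. -/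
open Finset

/-- The k-vehicle single-step inequality. -/
theorem stmt_2 (k : ℕ) (hk : 2 ≤ k) (γ : ℝ) (hγ : 0 < γ)
    (a p : ℕ → ℝ) (q : ℕ → ℕ → ℝ)
    (h1 : ∀ j ∈ Finset.Icc 1 (k - 1), p j ≥ ∑ i ∈ Finset.Icc 1 k, q i j)
    (h2 : ∀ i ∈ Finset.Icc 1 k,
      p k ≥ 1 / (3 * γ) * (a i - ∑ j ∈ Finset.Icc 1 (k - 1), q i j)) :
    ∑ i ∈ Finset.Icc 1 k, p i ≥
      (3 * γ * k - 1) / (3 * γ * k) * ∑ i ∈ Finset.Icc 1 (k - 1), p i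
        + 1 / (3 * γ * k) * ∑ i ∈ Finset.Icc 1 k, a i := by
  set S := ∑ i ∈ Finset.Icc 1 (k-1), p i with hS
  set A := ∑ i ∈ Finset.Icc 1 k, a i with hA
  set Q := ∑ i ∈ Finset.Icc 1 k, ∑ j ∈ Finset.Icc 1 (k-1), q i j with hQdef
  have hsplit : ∑ i ∈ Finset.Icc 1 k, p i = S + p k := by
    have h : Finset.Icc 1 k = insert k (Finset.Icc 1 (k-1)) := by
      ext x; simp only [Finset.mem_Icc, Finset.mem_insert]; omega
    rw [h, Finset.sum_insert (by simp only [Finset.mem_Icc]; omega)]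
    ring
  have hQS : Q ≤ S := by
    have := Finset.sum_le_sum h1
    rw [Finset.sum_comm] at hQdef
    linarith [this]
  have h3γ : (0:ℝ) < 3 * γ := by positivity
  have hck : (0:ℝ) < 3 * γ * k := by positivity
  have hsum2 : (k : ℝ) * p k ≥ 1 / (3 * γ) * (A - Q) := by
    have h := Finset.sum_le_sum h2
    simp only [Finset.sum_const, Nat.card_Icc, nsmul_eq_mul] at h
    have he : ∑ i ∈ Finset.Icc 1 k, 1 / (3 * γ) * (a i - ∑ j ∈ Finset.Icc 1 (k-1), q i j)
        = 1 / (3 * γ) * (A - Q) := by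
      rw [← Finset.mul_sum, Finset.sum_sub_distrib]
    rw [he] at h
    have hcast : ((k + 1 - 1 : ℕ) : ℝ) = (k : ℝ) := by norm_num
    rw [hcast] at h
    exact h
  have h5 : 1 / (3 * γ * k) * (A - S) ≤ p k := by
    rw [div_mul_eq_mul_div, one_mul, div_le_iff₀ hck]
    rw [ge_iff_le, div_mul_eq_mul_div, one_mul, div_le_iff₀ h3γ] at hsum2
    nlinarith [hQS]
  have hdiv : (3 * γ * (k:ℝ) - 1) / (3 * γ * k) = 1 - 1 / (3 * γ * k) := by
    field_simp
  rw [hsplit, hdiv]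
  have hr : (1 - 1 / (3 * γ * (k:ℝ))) * S + 1 / (3 * γ * k) * A
      = S + 1 / (3 * γ * k) * (A - S) := by ring
  rw [ge_iff_le, hr]
  linarith [h5]
end

section
/- Let γ ≥ 1 be a real number and let P : ℕ → ℝ satisfy P(1) = 1/(3γ) and, for every integer k ≥ 2, P(k) = ((3γk² − (3γ+1)k + 1)/(3γk²))·P(k−1) + 1/(3γk). Then for every integer k ≥ 1, P(k) > 1/(3γ + 1). -/
/-- The recurrence P_γ(k) always beats the factor 1/(3γ+1). -/
theorem stmt_5 (γ : ℝ) (hγ : 1 ≤ γ) (P : ℕ → ℝ)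
    (hP1 : P 1 = 1 / (3 * γ))
    (hPk : ∀ k : ℕ, 2 ≤ k →
      P k = (3 * γ * (k : ℝ) ^ 2 - (3 * γ + 1) * k + 1) / (3 * γ * (k : ℝ) ^ 2)
              * P (k - 1) + 1 / (3 * γ * k)) :
    ∀ k : ℕ, 1 ≤ k → P k > 1 / (3 * γ + 1) := by
  have hc : (0:ℝ) < 3 * γ := by linarith
  have hc1 : (0:ℝ) < 3 * γ + 1 := by linarith
  intro k hk
  induction k, hk using Nat.le_induction with
  | base =>
    rw [hP1]
    exact one_div_lt_one_div_of_lt hc (by linarith)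
  | succ n hn ih =>
    have hx1 : (1:ℝ) ≤ (n:ℝ) := by exact_mod_cast hn
    have hrec := hPk (n+1) (by omega)
    simp only [Nat.add_sub_cancel] at hrec
    rw [hrec]
    push_cast
    set x : ℝ := (n:ℝ) + 1 with hxdef
    have hx2 : (2:ℝ) ≤ x := by rw [hxdef]; linarith
    have hden : (0:ℝ) < 3 * γ * x ^ 2 := by nlinarith
    have hnum : (0:ℝ) ≤ 3 * γ * x ^ 2 - (3 * γ + 1) * x + 1 := by nlinarith
    have hA : (0:ℝ) ≤ (3 * γ * x ^ 2 - (3 * γ + 1) * x + 1) / (3 * γ * x ^ 2) :=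
      div_nonneg hnum hden.le
    have h1 : (3 * γ * x ^ 2 - (3 * γ + 1) * x + 1) / (3 * γ * x ^ 2) * (1 / (3 * γ + 1))
        ≤ (3 * γ * x ^ 2 - (3 * γ + 1) * x + 1) / (3 * γ * x ^ 2) * P n :=
      mul_le_mul_of_nonneg_left ih.le hA
    have hxpos : (0:ℝ) < x := by linarith
    have hE : (3 * γ * x ^ 2 - (3 * γ + 1) * x + 1) / (3 * γ * x ^ 2) * (1 / (3 * γ + 1))
        + 1 / (3 * γ * x) - 1 / (3 * γ + 1) = 1 / (3 * γ * x ^ 2 * (3 * γ + 1)) := by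
      field_simp
      ring
    have hpos : (0:ℝ) < 1 / (3 * γ * x ^ 2 * (3 * γ + 1)) :=
      one_div_pos.mpr (by nlinarith)
    linarith
end

section
/- Let k ≥ 1 be an integer and γ ≥ 1 a real number. Let a₁ ≥ a₂ ≥ … ≥ a_k ≥ 0 and p₁, …, p_k be real numbers, and let q_{i,j} ≥ 0 be real numbers for 1 ≤ i ≤ k, 1 ≤ j ≤ k. Suppose that (i) p_j ≥ Σ_{i=1}^{k} q_{i,j} for every 1 ≤ j ≤ k, and (ii) p_j ≥ (1/(3γ))·(a_i − Σ_{j'=1}^{j−1} q_{i,j'}) for every 1 ≤ j ≤ k and every 1 ≤ i ≤ k. Let P : ℕ → ℝ satisfy P(1) = 1/(3γ) and, for every integer m ≥ 2, P(m) = ((3γm² − (3γ+1)m + 1)/(3γm²))·P(m−1) + 1/(3γm). Then Σ_{j=1}^{k} p_j ≥ P(k)·Σ_{i=1}^{k} a_i. -/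
/-!
Write `β = 1/(3γ)` and `S = ∑ aᵢ`. Summing (ii) over the `k` optimal runs and bounding the profit
already collected from them by (i) gives `k p_{j+1} ≥ β (S - ∑_{j' ≤ j} p_{j'})`, so the part of `S`
not yet collected shrinks by a factor `1 - β/k` per pass and `∑ p_j ≥ (1 - (1 - β/k)^k) S`.
The recurrence makes `1 - P m = (1 - β/m) (1 + (m-1)(1 - P (m-1))) / m`, and convexity of
`t ↦ t^(m-1)` turns this into `P m ≤ 1 - (1 - β/m)^m` by induction.
-/

open Finset

lemma pow_mean_le (n : ℕ) {B : ℝ} (hB : 0 ≤ B) :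
    ((1 + n * B) / (n + 1)) ^ n ≤ (1 + n * B ^ n) / (n + 1) := by
  have h := (convexOn_pow n).2 (Set.mem_Ici.2 zero_le_one) (Set.mem_Ici.2 hB)
    (show (0 : ℝ) ≤ 1 / (n + 1) by positivity) (show (0 : ℝ) ≤ n / (n + 1) by positivity)
    (by field_simp; ring)
  simp only [smul_eq_mul, one_pow] at h
  have hmean : (1 + n * B) / (n + 1) = 1 / (n + 1) * 1 + n / (n + 1) * B := by ring
  have hmean_pow : (1 + n * B ^ n) / (n + 1) = 1 / (n + 1) * 1 + n / (n + 1) * B ^ n := by ring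
  rw [hmean, hmean_pow]
  exact h

lemma le_one_sub_pow_of_rec {β : ℝ} (hβ : β ≤ 1) {P : ℕ → ℝ} (hP1 : P 1 = β)
    (hPm : ∀ m : ℕ, 2 ≤ m →
      P m = ((m - 1) * (m - β) / (m : ℝ) ^ 2) * P (m - 1) + β / m) :
    ∀ m : ℕ, 1 ≤ m → P m ≤ 1 - (1 - β / m) ^ m := by
  intro m hm
  induction m, hm using Nat.le_induction with
  | base => simp [hP1]
  | succ n hn ih =>
    have hn0 : (0 : ℝ) < n := by exact_mod_cast hn
    have hn1 : (1 : ℝ) ≤ n := by exact_mod_cast hn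
    set A : ℝ := 1 - β / (n + 1)
    set B : ℝ := 1 - β / n
    have hA : 0 ≤ A := by
      rw [sub_nonneg, div_le_one (by positivity)]
      linarith
    have hB : 0 ≤ B := by
      rw [sub_nonneg, div_le_one hn0]
      linarith
    have hrec : 1 - P (n + 1) = A * ((1 + n * (1 - P n)) / (n + 1)) := by
      rw [hPm (n + 1) (by omega), Nat.add_sub_cancel]
      push_cast
      simp only [A]
      field_simp
      ring
    have hmean : (1 + n * B) / (n + 1) = A := by
      simp only [A, B]
      field_simp
      ring
    have hstep : A ^ n ≤ (1 + n * (1 - P n)) / (n + 1) :=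
      calc A ^ n = ((1 + n * B) / (n + 1)) ^ n := by rw [hmean]
        _ ≤ (1 + n * B ^ n) / (n + 1) := pow_mean_le n hB
        _ ≤ (1 + n * (1 - P n)) / (n + 1) := by gcongr; linarith
    have hpow : A ^ (n + 1) ≤ 1 - P (n + 1) := by
      rw [hrec, pow_succ']
      exact mul_le_mul_of_nonneg_left hstep hA
    push_cast
    linarith

lemma one_sub_pow_mul_sum_le_sum_Icc {k : ℕ} {β : ℝ} (hβ0 : 0 ≤ β) (hβk : β ≤ k)
    {a p : ℕ → ℝ} {q : ℕ → ℕ → ℝ}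
    (h1 : ∀ j ∈ Icc 1 k, ∑ i ∈ Icc 1 k, q i j ≤ p j)
    (h2 : ∀ j ∈ Icc 1 k, ∀ i ∈ Icc 1 k, β * (a i - ∑ j' ∈ Icc 1 (j - 1), q i j') ≤ p j)
    {n : ℕ} (hn : n ≤ k) :
    (1 - (1 - β / k) ^ n) * ∑ i ∈ Icc 1 k, a i ≤ ∑ j ∈ Icc 1 n, p j := by
  set S := ∑ i ∈ Icc 1 k, a i
  have hstep : ∀ m < k,
      S - ∑ j ∈ Icc 1 (m + 1), p j ≤ (1 - β / k) * (S - ∑ j ∈ Icc 1 m, p j) := by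
    intro m hm
    have hk : (0 : ℝ) < k := by exact_mod_cast (m.zero_le.trans_lt hm)
    have hmem : m + 1 ∈ Icc 1 k := mem_Icc.2 ⟨by omega, hm⟩
    have hcollected : ∑ i ∈ Icc 1 k, ∑ j ∈ Icc 1 m, q i j ≤ ∑ j ∈ Icc 1 m, p j := by
      rw [sum_comm]
      exact sum_le_sum fun j hj => h1 j (Icc_subset_Icc_right hm.le hj)
    have hpass : β * (S - ∑ i ∈ Icc 1 k, ∑ j ∈ Icc 1 m, q i j) ≤ k * p (m + 1) := by
      have h := sum_le_sum fun i hi => h2 (m + 1) hmem i hi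
      rwa [← mul_sum, sum_sub_distrib, sum_const, Nat.card_Icc, Nat.add_sub_cancel, nsmul_eq_mul,
        Nat.add_sub_cancel] at h
    have hgain : β * (S - ∑ j ∈ Icc 1 m, p j) / k ≤ p (m + 1) := by
      rw [div_le_iff₀' hk]
      exact (mul_le_mul_of_nonneg_left (sub_le_sub_left hcollected S) hβ0).trans hpass
    have hshrink : (1 - β / k) * (S - ∑ j ∈ Icc 1 m, p j)
        = S - ∑ j ∈ Icc 1 m, p j - β * (S - ∑ j ∈ Icc 1 m, p j) / k := by ring
    rw [sum_Icc_succ_top (by omega), hshrink]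
    linarith
  have hx : 0 ≤ 1 - β / k := by
    rcases k.eq_zero_or_pos with rfl | hk
    · simp
    · rw [sub_nonneg, div_le_one (by exact_mod_cast hk)]
      exact hβk
  have := le_geom (u := fun m => S - ∑ j ∈ Icc 1 m, p j) hx n
    fun m hm => hstep m (hm.trans_le hn)
  simp only [Icc_eq_empty_of_lt zero_lt_one, sum_empty, sub_zero] at this
  linarith

theorem stmt_6_general (k : ℕ) (hk : 1 ≤ k) (γ : ℝ) (hγ : 1 ≤ γ)
    (a p : ℕ → ℝ) (q : ℕ → ℕ → ℝ)
    (hann : ∀ i ∈ Finset.Icc 1 k, 0 ≤ a i)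
    (h1 : ∀ j ∈ Finset.Icc 1 k, p j ≥ ∑ i ∈ Finset.Icc 1 k, q i j)
    (h2 : ∀ j ∈ Finset.Icc 1 k, ∀ i ∈ Finset.Icc 1 k,
      p j ≥ 1 / (3 * γ) * (a i - ∑ j' ∈ Finset.Icc 1 (j - 1), q i j'))
    (P : ℕ → ℝ)
    (hP1 : P 1 = 1 / (3 * γ))
    (hPm : ∀ m : ℕ, 2 ≤ m →
      P m = (3 * γ * (m : ℝ) ^ 2 - (3 * γ + 1) * m + 1) / (3 * γ * (m : ℝ) ^ 2)
              * P (m - 1) + 1 / (3 * γ * m)) :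
    ∑ j ∈ Finset.Icc 1 k, p j ≥ P k * ∑ i ∈ Finset.Icc 1 k, a i := by
  have hγ0 : 0 < 3 * γ := by linarith
  have hβ : 1 / (3 * γ) ≤ 1 := by
    rw [div_le_one hγ0]
    linarith
  have hPk : P k ≤ 1 - (1 - 1 / (3 * γ) / k) ^ k := by
    refine le_one_sub_pow_of_rec hβ hP1 (fun m hm => ?_) k hk
    have hm0 : (0 : ℝ) < m := by exact_mod_cast (by omega : 0 < m)
    rw [hPm m hm]
    field_simp
    ring
  have hgreedy := one_sub_pow_mul_sum_le_sum_Icc (by positivity)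
    (hβ.trans (by exact_mod_cast hk)) h1 h2 le_rfl
  exact (mul_le_mul_of_nonneg_right hPk (sum_nonneg hann)).trans hgreedy

/-- Full arithmetic content of the k-vehicle approximation guarantee. -/
theorem stmt_6 (k : ℕ) (hk : 1 ≤ k) (γ : ℝ) (hγ : 1 ≤ γ)
    (a p : ℕ → ℝ) (q : ℕ → ℕ → ℝ)
    (hmono : ∀ i ∈ Finset.Icc 1 k, ∀ j ∈ Finset.Icc 1 k, i ≤ j → a j ≤ a i)
    (hann : ∀ i ∈ Finset.Icc 1 k, 0 ≤ a i)
    (hqnn : ∀ i ∈ Finset.Icc 1 k, ∀ j ∈ Finset.Icc 1 k, 0 ≤ q i j)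
    (h1 : ∀ j ∈ Finset.Icc 1 k, p j ≥ ∑ i ∈ Finset.Icc 1 k, q i j)
    (h2 : ∀ j ∈ Finset.Icc 1 k, ∀ i ∈ Finset.Icc 1 k,
      p j ≥ 1 / (3 * γ) * (a i - ∑ j' ∈ Finset.Icc 1 (j - 1), q i j'))
    (P : ℕ → ℝ)
    (hP1 : P 1 = 1 / (3 * γ))
    (hPm : ∀ m : ℕ, 2 ≤ m →
      P m = (3 * γ * (m : ℝ) ^ 2 - (3 * γ + 1) * m + 1) / (3 * γ * (m : ℝ) ^ 2)
              * P (m - 1) + 1 / (3 * γ * m)) :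
    ∑ j ∈ Finset.Icc 1 k, p j ≥ P k * ∑ i ∈ Finset.Icc 1 k, a i :=
  stmt_6_general k hk γ hγ a p q hann h1 h2 P hP1 hPm
end
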